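/- Let M be a three-valued model of a DLPOD P. Then M is a model of the ×-reduct P^M_×. -/

import Mathlib

/-! Four truth values F < F* < T* < T. -/
inductive V4 : Type
  | F | Fs | Ts | T
  deriving DecidableEq, Repr

instance : Fintype V4 where
  elems := {V4.F, V4.Fs, V4.Ts, V4.T}
  complete := by intro x; cases x <;> simp

namespace V4

def toNat : V4 → ℕ
  | F => 0
  | Fs => 1
  | Ts => 2
  | T => 3

theorem toNat_injective : Function.Injective toNat := by
  intro a b h
  cases a <;> cases b <;> simp_all [toNat]

instance : LinearOrder V4 := LinearOrder.lift' toNat toNat_injective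

instance : BoundedOrder V4 where
  top := T
  le_top a := by cases a <;> decide
  bot := F
  bot_le a := by cases a <;> decide

/-- Negation-as-failure: `not φ` is `T` if `φ ≤ F*`, else `F`. -/
def notv (a : V4) : V4 := if a ≤ Fs then T else F

/-- Ordered disjunction on truth values: `u × v = v` if `u = F*`, else `u`. -/
def times (a b : V4) : V4 := if a = Fs then b else a

end V4

variable {α : Type}

/-- A ground literal: an atom together with a polarity (`true` = the atom itself,
`false` = its strong negation). -/
structure Lit (α : Type) where
  atom : α
  positive : Bool
  deriving DecidableEq

/-- A (four-valued) interpretation assigns a truth value to every literal.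
Three-valued interpretations are the `solid` ones (no `T*` value). -/
abbrev Interp (α : Type) := Lit α → V4

/-- `I` is solid (equivalently, three-valued) if it assigns `T*` to no literal. -/
def solid (I : Interp α) : Prop := ∀ l, I l ≠ V4.Ts

/-- `I` is consistent: no atom has both the atom and its strong negation `T`. -/
def consistentI (I : Interp α) : Prop :=
  ∀ a : α, ¬ (I ⟨a, true⟩ = V4.T ∧ I ⟨a, false⟩ = V4.T)

/-- `I` takes values only in `{F, T}`. -/
def twoValued (I : Interp α) : Prop := ∀ l, I l = V4.F ∨ I l = V4.T

/-- Value of the conjunction of a list of literals. -/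
def evalConj (I : Interp α) (L : List (Lit α)) : V4 := (L.map I).foldr min V4.T

/-- Value of the conjunction `not B1 ∧ ⋯ ∧ not Bk`. -/
def evalNegs (I : Interp α) (L : List (Lit α)) : V4 :=
  (L.map (fun b => V4.notv (I b))).foldr min V4.T

/-- Value of the disjunction of a list of literals. -/
def evalDisj (I : Interp α) (L : List (Lit α)) : V4 := (L.map I).foldr max V4.F

/-- Value of an ordered disjunction of the given (nonempty) list of values.
(`F*` is a right identity for `×`, so the fold computes `v1 × ⋯ × vn`.) -/
def evalOD (vs : List V4) : V4 := vs.foldr V4.times V4.Fs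

/-- Pointwise `≤` on interpretations. -/
def interpLE (I J : Interp α) : Prop := ∀ l, I l ≤ J l

/-- The four-valued relation `⪯`: `u ⪯ v` iff `u = v` or `u ≺ v`, where
`F ≺ F*`, `F ≺ T*`, `F ≺ T` and `T* ≺ T`.  On three-valued (solid)
interpretations it restricts to the ordering generated by `F ≺ F*`, `F ≺ T`. -/
def preceq (u v : V4) : Prop :=
  u = v ∨ (u = V4.F ∧ v ≠ V4.F) ∨ (u = V4.Ts ∧ v = V4.T)

/-- Pointwise `⪯` on interpretations. -/
def interpPreceq (I J : Interp α) : Prop := ∀ l, preceq (I l) (J l)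

/-- The set of literals that are `T` in `I`. -/
def collapse (I : Interp α) : Set (Lit α) := { l | I l = V4.T }

/-! ### LPOD rules -/

/-- An LPOD rule `C1 × ⋯ × Cn ← A1,…,Am, not B1,…,not Bk` with head
`c1 :: cs` (so the head is nonempty). -/
structure Rule (α : Type) where
  c1 : Lit α
  cs : List (Lit α)
  pos : List (Lit α)
  neg : List (Lit α)

def Rule.headList (R : Rule α) : List (Lit α) := R.c1 :: R.cs

def Rule.headVal (R : Rule α) (I : Interp α) : V4 := evalOD (R.headList.map I)

def Rule.bodyVal (R : Rule α) (I : Interp α) : V4 :=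
  min (evalConj I R.pos) (evalNegs I R.neg)

/-- `I` satisfies the rule `R` (the rule evaluates to `T`). -/
def ruleSat (I : Interp α) (R : Rule α) : Prop := R.bodyVal I ≤ R.headVal I

/-- `I` is a model of the LPOD `P`. -/
def isModel (I : Interp α) (P : Set (Rule α)) : Prop := ∀ R ∈ P, ruleSat I R

/-! ### The ×-reduct of an LPOD -/

/-- A reduct rule `C ← [F*,] A1,…,Am`; `fstar` records whether the constant `F*`
occurs in the body. -/
structure RedRule (α : Type) where
  head : Lit α
  pos : List (Lit α)
  fstar : Bool

def RedRule.bodyVal (r : RedRule α) (I : Interp α) : V4 :=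
  min (if r.fstar then V4.Fs else V4.T) (evalConj I r.pos)

def redSat (I : Interp α) (r : RedRule α) : Prop := r.bodyVal I ≤ I r.head

def redModel (I : Interp α) (Q : Set (RedRule α)) : Prop := ∀ r ∈ Q, redSat I r

/-- Reduct rules generated by a head `C1,…,Cn`: rules `Cj ← F*, body` for
`j < r` and `Cr ← body`, where `r` is the least index with
`I C1 = ⋯ = I C_{r-1} = F*` and (`r = n` or `I Cr ≠ F*`). -/
def xredHead (I : Interp α) (body : List (Lit α)) : List (Lit α) → List (RedRule α)
  | [] => []
  | [c] => [⟨c, body, false⟩]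
  | c :: c' :: rest =>
    if I c = V4.Fs then ⟨c, body, true⟩ :: xredHead I body (c' :: rest)
    else [⟨c, body, false⟩]

/-- The ×-reduct of a rule w.r.t. `I`. -/
def xredRule (I : Interp α) (R : Rule α) : List (RedRule α) :=
  if ∃ b ∈ R.neg, I b = V4.T then [] else xredHead I R.pos R.headList

/-- The ×-reduct of an LPOD w.r.t. `I`. -/
def xreduct (I : Interp α) (P : Set (Rule α)) : Set (RedRule α) :=
  { r | ∃ R ∈ P, r ∈ xredRule I R }

/-- `M` is a three-valued answer set of the LPOD `P`: a consistent three-valued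
interpretation that is the `≤`-least (three-valued) model of `P^M_×`. -/
def threeAnswerSet (P : Set (Rule α)) (M : Interp α) : Prop :=
  solid M ∧ consistentI M ∧ redModel M (xreduct M P) ∧
  ∀ N : Interp α, solid N → redModel N (xreduct M P) → interpLE M N

/-! ### Two-valued notions: Brewka answer sets and GL answer sets -/

/-- A set of literals is consistent if it contains no complementary pair. -/
def twoConsistent (N : Set (Lit α)) : Prop :=
  ∀ a : α, ¬ (Lit.mk a true ∈ N ∧ Lit.mk a false ∈ N)

/-- `N` is a (two-valued) Brewka-model of the LPOD `P`. -/
def brewkaModel (N : Set (Lit α)) (P : Set (Rule α)) : Prop :=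
  ∀ R ∈ P, (∀ a ∈ R.pos, a ∈ N) → (∀ b ∈ R.neg, b ∉ N) → ∃ c ∈ R.headList, c ∈ N

/-- A positive rule `C ← A1,…,Am`. -/
structure PosRule (α : Type) where
  head : Lit α
  pos : List (Lit α)

/-- `N` is a two-valued model of a positive program. -/
def posModel (N : Set (Lit α)) (Q : Set (PosRule α)) : Prop :=
  ∀ r ∈ Q, (∀ a ∈ r.pos, a ∈ N) → r.head ∈ N

/-- The Brewka ×-reduct of an LPOD w.r.t. a set of literals `N`:
`Ci ← A1,…,Am` whenever `Ci ∈ N` and `N ∩ {C1,…,C_{i-1},B1,…,Bk} = ∅`. -/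
def brewkaReduct (N : Set (Lit α)) (P : Set (Rule α)) : Set (PosRule α) :=
  { r | ∃ R ∈ P, ∃ l1 l2 : List (Lit α),
      R.headList = l1 ++ r.head :: l2 ∧ r.pos = R.pos ∧ r.head ∈ N ∧
      (∀ c ∈ l1, c ∉ N) ∧ (∀ b ∈ R.neg, b ∉ N) }

/-- `N` is a Brewka answer set of the LPOD `P`. -/
def brewkaAnswerSet (P : Set (Rule α)) (N : Set (Lit α)) : Prop :=
  twoConsistent N ∧ brewkaModel N P ∧ posModel N (brewkaReduct N P) ∧
  ∀ N', posModel N' (brewkaReduct N P) → N ⊆ N'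

/-- The Gelfond–Lifschitz reduct of an extended logic program (an LPOD all
of whose rule heads are single literals) w.r.t. a set of literals `N`. -/
def glReduct (P : Set (Rule α)) (N : Set (Lit α)) : Set (PosRule α) :=
  { r | ∃ R ∈ P, (∀ b ∈ R.neg, b ∉ N) ∧ r.head = R.c1 ∧ r.pos = R.pos }

/-- `N` is a standard answer set of the extended logic program `P`: a consistent
set of literals that is the least model of `P^N`. -/
def stdAnswerSet (P : Set (Rule α)) (N : Set (Lit α)) : Prop :=
  twoConsistent N ∧ posModel N (glReduct P N) ∧
  ∀ N', posModel N' (glReduct P N) → N ⊆ N'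

/-! ### DLPODs -/

/-- A DLPOD rule `𝒞1 × ⋯ × 𝒞n ← A1,…,Am, not B1,…,not Bk`, where each `𝒞i`
is a disjunction of literals; the head is `c1 :: cs` (nonempty). -/
structure DRule (α : Type) where
  c1 : List (Lit α)
  cs : List (List (Lit α))
  pos : List (Lit α)
  neg : List (Lit α)

def DRule.headList (R : DRule α) : List (List (Lit α)) := R.c1 :: R.cs

def DRule.headVal (R : DRule α) (I : Interp α) : V4 :=
  evalOD (R.headList.map (evalDisj I))

def DRule.bodyVal (R : DRule α) (I : Interp α) : V4 :=
  min (evalConj I R.pos) (evalNegs I R.neg)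

def dRuleSat (I : Interp α) (R : DRule α) : Prop := R.bodyVal I ≤ R.headVal I

def isDModel (I : Interp α) (P : Set (DRule α)) : Prop := ∀ R ∈ P, dRuleSat I R

/-- A disjunctive reduct rule `𝒞 ← [F*,] A1,…,Am`. -/
structure DRedRule (α : Type) where
  head : List (Lit α)
  pos : List (Lit α)
  fstar : Bool

def DRedRule.bodyVal (r : DRedRule α) (I : Interp α) : V4 :=
  min (if r.fstar then V4.Fs else V4.T) (evalConj I r.pos)

def dredSat (I : Interp α) (r : DRedRule α) : Prop := r.bodyVal I ≤ evalDisj I r.head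

def dredModel (I : Interp α) (Q : Set (DRedRule α)) : Prop := ∀ r ∈ Q, dredSat I r

def dxredHead (I : Interp α) (body : List (Lit α)) :
    List (List (Lit α)) → List (DRedRule α)
  | [] => []
  | [c] => [⟨c, body, false⟩]
  | c :: c' :: rest =>
    if evalDisj I c = V4.Fs then ⟨c, body, true⟩ :: dxredHead I body (c' :: rest)
    else [⟨c, body, false⟩]

/-- The ×-reduct of a DLPOD rule w.r.t. `I`. -/
def dxredRule (I : Interp α) (R : DRule α) : List (DRedRule α) :=
  if ∃ b ∈ R.neg, I b = V4.T then [] else dxredHead I R.pos R.headList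

/-- The ×-reduct of a DLPOD w.r.t. `I`. -/
def dxreduct (I : Interp α) (P : Set (DRule α)) : Set (DRedRule α) :=
  { r | ∃ R ∈ P, r ∈ dxredRule I R }

/-- `M` is an answer set of the DLPOD `P`: a consistent three-valued
interpretation that is a `≤`-minimal (three-valued) model of `P^M_×`. -/
def dAnswerSet (P : Set (DRule α)) (M : Interp α) : Prop :=
  solid M ∧ consistentI M ∧ dredModel M (dxreduct M P) ∧
  ∀ N : Interp α, solid N → dredModel N (dxreduct M P) → interpLE N M → N = M

/-- A positive disjunctive rule `C1 ∨ ⋯ ∨ Cq ← A1,…,Am`. -/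
structure DPosRule (α : Type) where
  head : List (Lit α)
  pos : List (Lit α)

/-- `N` is a two-valued model of a positive disjunctive program. -/
def dposModel (N : Set (Lit α)) (Q : Set (DPosRule α)) : Prop :=
  ∀ r ∈ Q, (∀ a ∈ r.pos, a ∈ N) → ∃ c ∈ r.head, c ∈ N

/-- The Gelfond–Lifschitz reduct of a disjunctive extended logic program (a
DLPOD all of whose rule heads are single disjunctions). -/
def glDReduct (P : Set (DRule α)) (N : Set (Lit α)) : Set (DPosRule α) :=
  { r | ∃ R ∈ P, (∀ b ∈ R.neg, b ∉ N) ∧ r.head = R.c1 ∧ r.pos = R.pos }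

/-- `N` is a standard disjunctive answer set: a consistent set of literals that
is a minimal two-valued model of `P^N`. -/
def stdDAnswerSet (P : Set (DRule α)) (N : Set (Lit α)) : Prop :=
  twoConsistent N ∧ dposModel N (glDReduct P N) ∧
  ∀ N', dposModel N' (glDReduct P N) → N' ⊆ N → N' = N

namespace V4

lemma le_Fs_of_ne_Ts_of_ne_T {a : V4} (hTs : a ≠ Ts) (hT : a ≠ T) : a ≤ Fs := by
  cases a <;> first | decide | contradiction

lemma notv_eq_T {a : V4} (h : a ≤ Fs) : notv a = T := if_pos h

lemma Fs_times (b : V4) : times Fs b = b := if_pos rfl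

lemma times_of_ne_Fs {a : V4} (ha : a ≠ Fs) (b : V4) : times a b = a := if_neg ha

lemma times_Fs (a : V4) : times a Fs = a := by
  unfold times; split_ifs with h <;> simp [h]

end V4

lemma evalOD_singleton (v : V4) : evalOD [v] = v := V4.times_Fs v

lemma evalOD_cons_Fs (vs : List V4) : evalOD (V4.Fs :: vs) = evalOD vs :=
  V4.Fs_times _

lemma evalOD_cons_of_ne_Fs {v : V4} (hv : v ≠ V4.Fs) (vs : List V4) :
    evalOD (v :: vs) = v := V4.times_of_ne_Fs hv _

lemma evalNegs_eq_T {I : Interp α} {L : List (Lit α)} (hL : ∀ b ∈ L, I b ≤ V4.Fs) :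
    evalNegs I L = V4.T := by
  induction L with
  | nil => rfl
  | cons b L ih =>
    simp only [evalNegs, List.map_cons, List.foldr_cons] at ih ⊢
    rw [V4.notv_eq_T (hL b List.mem_cons_self), ih fun c hc => hL c (List.mem_cons_of_mem b hc)]
    exact min_self _

lemma DRule.bodyVal_eq_evalConj {I : Interp α} (hI : solid I) {R : DRule α}
    (hneg : ∀ b ∈ R.neg, I b ≠ V4.T) : R.bodyVal I = evalConj I R.pos := by
  rw [DRule.bodyVal, evalNegs_eq_T fun b hb => V4.le_Fs_of_ne_Ts_of_ne_T (hI b) (hneg b hb)]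
  exact min_eq_left le_top

/-- The rules `𝒞j ← F*, body` hold because `I 𝒞j = F*`; the last rule `𝒞r ← body` holds
because the ordered disjunction `𝒞1 × ⋯ × 𝒞n` takes the value of `𝒞r`. -/
theorem dredSat_of_mem_dxredHead (I : Interp α) (body : List (Lit α)) :
    ∀ hs : List (List (Lit α)), evalConj I body ≤ evalOD (hs.map (evalDisj I)) →
      ∀ r ∈ dxredHead I body hs, dredSat I r
  | [], _, r, hr => by simp [dxredHead] at hr
  | [c], hle, r, hr => by
    obtain rfl : r = ⟨c, body, false⟩ := by simpa [dxredHead] using hr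
    rw [List.map_singleton, evalOD_singleton] at hle
    exact (min_le_right _ _).trans hle
  | c :: c' :: rest, hle, r, hr => by
    by_cases hc : evalDisj I c = V4.Fs
    · rw [dxredHead, if_pos hc, List.mem_cons] at hr
      rcases hr with rfl | hr
      · simp only [dredSat, DRedRule.bodyVal, if_true, hc]
        exact min_le_left _ _
      · rw [List.map_cons, hc, evalOD_cons_Fs] at hle
        exact dredSat_of_mem_dxredHead I body (c' :: rest) hle r hr
    · rw [dxredHead, if_neg hc, List.mem_singleton] at hr
      subst hr
      rw [List.map_cons, evalOD_cons_of_ne_Fs hc] at hle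
      exact (min_le_right _ _).trans hle

/-- Every three-valued model of a DLPOD `P` is a model of the
×-reduct `P^M_×`. -/
theorem isDModel_dredModel_dxreduct {α : Type} (P : Set (DRule α)) (M : Interp α)
    (hM : solid M) (h : isDModel M P) : dredModel M (dxreduct M P) := by
  rintro r ⟨R, hRP, hr⟩
  rw [dxredRule] at hr
  split_ifs at hr with hneg
  · exact absurd hr List.not_mem_nil
  · push Not at hneg
    have hsat : evalConj M R.pos ≤ R.headVal M :=
      DRule.bodyVal_eq_evalConj hM hneg ▸ h R hRP
    exact dredSat_of_mem_dxredHead M R.pos R.headList hsat r hr
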